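/- arXiv:1805.02144 — 4 statements merged into one kernel-verified Lean document; each statement's English description precedes it below -/
import Mathlib

section
/- Let E be a finite-dimensional real normed vector space, J : E → E a continuous linear map, and N : ℝ → E continuous. Suppose u : ℝ → E is differentiable and satisfies u'(t) = J(u(t)) + N(t) for all t. Then for every t₀ and every h ≥ 0, u(t₀ + h) = exp(hJ)(u(t₀)) + h·φ₁(hJ)(N(t₀)) + ∫₀ʰ exp((h−τ)J)(N(t₀+τ) − N(t₀)) dτ; in particular the local error of the exponential Rosenbrock–Euler step is exactly the integral remainder term. -/
/-!
Duhamel's formula: if `u' = J u + N`, then `τ ↦ exp(-τJ) u(t₀ + τ)` has derivative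
`exp(-τJ) N(t₀ + τ)`, and integrating over `[0, h]` and applying `exp(hJ)` gives
`u(t₀ + h) = exp(hJ) u(t₀) + ∫₀ʰ exp((h - τ)J) N(t₀ + τ) dτ`. Writing
`N(t₀ + τ) = N(t₀) + (N(t₀ + τ) - N(t₀))`, the constant part integrates to `h φ₁(hJ) N(t₀)`
by the substitution `τ = hθ` in the definition of `φ₁`.
-/

open MeasureTheory intervalIntegral

/-- The `φ`-functions of exponential integrators, for a continuous linear
endomorphism `A` of a finite-dimensional real normed vector space:
`φ₀(A) = exp(A)` and, for `k ≥ 1`,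
`φ_k(A) = ∫₀¹ exp((1-θ)A) · θ^(k-1)/(k-1)! dθ`. -/
noncomputable def phiOp {E : Type*} [NormedAddCommGroup E] [NormedSpace ℝ E]
    [FiniteDimensional ℝ E] : ℕ → (E →L[ℝ] E) → (E →L[ℝ] E)
  | 0, A => NormedSpace.exp A
  | (k + 1), A =>
      ∫ θ in (0:ℝ)..1, (θ ^ k / (k.factorial : ℝ)) • NormedSpace.exp ((1 - θ) • A)

open NormedSpace

theorem exp_smul_mul_exp_smul {𝔸 : Type*} [NormedRing 𝔸] [NormedAlgebra ℝ 𝔸] [CompleteSpace 𝔸]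
    (x : 𝔸) (a b : ℝ) : exp (a • x) * exp (b • x) = exp ((a + b) • x) := by
  let _ : NormedAlgebra ℚ 𝔸 := NormedAlgebra.restrictScalars ℚ ℝ 𝔸
  rw [add_smul, exp_add_of_commute (((Commute.refl x).smul_left a).smul_right b)]

section VariationOfConstants

variable {E : Type*} [NormedAddCommGroup E] [NormedSpace ℝ E] [CompleteSpace E]
  {J : E →L[ℝ] E} {f u : ℝ → E}

theorem hasDerivAt_exp_smul_neg_apply {τ : ℝ} (hu : HasDerivAt u (J (u τ) + f τ) τ) :
    HasDerivAt (fun s => exp (s • -J) (u s)) (exp (τ • -J) (f τ)) τ := by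
  convert (hasDerivAt_exp_smul_const (-J) τ).clm_apply hu using 1
  simp [map_add]

theorem eq_exp_smul_apply_add_integral (hf : Continuous f)
    (hu : ∀ t, HasDerivAt u (J (u t) + f t) t) (h : ℝ) :
    u h = exp (h • J) (u 0) + ∫ τ in (0:ℝ)..h, exp ((h - τ) • J) (f τ) := by
  have hint : IntervalIntegrable (fun τ => exp (τ • -J) (f τ)) volume 0 h :=
    ((differentiable_exp_smul_const ℝ (-J)).continuous.clm_apply hf).intervalIntegrable 0 h
  have hftc : ∫ τ in (0:ℝ)..h, exp (τ • -J) (f τ) = exp (h • -J) (u h) - u 0 := by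
    simpa [exp_zero] using
      integral_eq_sub_of_hasDerivAt (fun τ _ => hasDerivAt_exp_smul_neg_apply (hu τ)) hint
  have hexp : ∀ τ, exp (h • J) * exp (τ • -J) = exp ((h - τ) • J) := fun τ => by
    simpa [sub_eq_add_neg] using exp_smul_mul_exp_smul J h (-τ)
  calc u h = exp (h • J) (exp (h • -J) (u h)) := by
        rw [← mul_apply_eq_comp, hexp, sub_self, zero_smul, exp_zero, one_apply_eq_self]
    _ = exp (h • J) (u 0) + ∫ τ in (0:ℝ)..h, exp ((h - τ) • J) (f τ) := by
        simp_rw [← hexp, mul_apply_eq_comp,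
          ContinuousLinearMap.intervalIntegral_comp_comm _ hint, hftc, map_sub, add_sub_cancel]

theorem eq_exp_smul_apply_add_integral_comp_add (hf : Continuous f)
    (hu : ∀ t, HasDerivAt u (J (u t) + f t) t) (t₀ h : ℝ) :
    u (t₀ + h) = exp (h • J) (u t₀) + ∫ τ in (0:ℝ)..h, exp ((h - τ) • J) (f (t₀ + τ)) := by
  simpa using eq_exp_smul_apply_add_integral (u := fun s => u (t₀ + s))
    (hf.comp (continuous_const_add t₀)) (fun t => (hu (t₀ + t)).comp_const_add t₀ t) h

end VariationOfConstants

theorem phiOp_one {E : Type*} [NormedAddCommGroup E] [NormedSpace ℝ E] [FiniteDimensional ℝ E]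
    (A : E →L[ℝ] E) : phiOp 1 A = ∫ θ in (0:ℝ)..1, exp ((1 - θ) • A) := by
  simp [phiOp]

theorem smul_phiOp_one_smul_apply {E : Type*} [NormedAddCommGroup E] [NormedSpace ℝ E]
    [FiniteDimensional ℝ E] (A : E →L[ℝ] E) (h : ℝ) (v : E) :
    h • phiOp 1 (h • A) v = ∫ τ in (0:ℝ)..h, exp ((h - τ) • A) v := by
  have hint : IntervalIntegrable (fun θ : ℝ => exp ((1 - θ) • h • A)) volume 0 1 :=
    ((differentiable_exp_smul_const ℝ (h • A)).continuous.comp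
      (continuous_const.sub continuous_id)).intervalIntegrable 0 1
  rw [phiOp_one, ContinuousLinearMap.intervalIntegral_apply hint]
  simpa [smul_smul, mul_sub, sub_mul, mul_comm] using
    smul_integral_comp_mul_left (fun τ => exp ((h - τ) • A) v) h (a := 0) (b := 1)

/-- If `u'(t) = J(u(t)) + N(t)` with `J` linear and `N` continuous then, for every
`t₀` and `h ≥ 0`,
`u(t₀+h) = exp(hJ)(u(t₀)) + h φ₁(hJ)(N(t₀)) + ∫₀ʰ exp((h-τ)J)(N(t₀+τ) - N(t₀)) dτ`;
the local error of the exponential Rosenbrock–Euler step is exactly the integral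
remainder term. -/
theorem exprb_euler_local_error_representation
    {E : Type*} [NormedAddCommGroup E] [NormedSpace ℝ E] [FiniteDimensional ℝ E]
    (J : E →L[ℝ] E) (N : ℝ → E) (hN : Continuous N)
    (u : ℝ → E) (hu : ∀ t : ℝ, HasDerivAt u (J (u t) + N t) t) :
    ∀ (t₀ h : ℝ), 0 ≤ h →
      u (t₀ + h) = NormedSpace.exp (h • J) (u t₀) + h • phiOp 1 (h • J) (N t₀)
        + ∫ τ in (0:ℝ)..h, NormedSpace.exp ((h - τ) • J) (N (t₀ + τ) - N t₀) := by
  intro t₀ h _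
  have hexp : Continuous fun τ : ℝ => exp ((h - τ) • J) :=
    (differentiable_exp_smul_const ℝ J).continuous.comp (continuous_const.sub continuous_id)
  have hdiff : Continuous fun τ => N (t₀ + τ) - N t₀ := by fun_prop
  rw [eq_exp_smul_apply_add_integral_comp_add hN hu, smul_phiOp_one_smul_apply, add_assoc,
    ← integral_add ((hexp.clm_apply continuous_const).intervalIntegrable 0 h)
      ((hexp.clm_apply hdiff).intervalIntegrable 0 h)]
  simp only [← map_add, add_sub_cancel]
end

section
/- Local error of the exponential Rosenbrock–Euler method: let E be a finite-dimensional real normed vector space, F : E → E twice continuously differentiable, h > 0, and let u : [t₀, t₀ + h] → E satisfy u'(t) = F(u(t)). Set J = DF(u(t₀)). Suppose there are constants C, M₁, M₂ ≥ 0 and an open convex set U containing u([t₀, t₀+h]) such that ‖exp(sJ)‖ ≤ C for all s ∈ [0,h], ‖u'(t)‖ ≤ M₁ for all t ∈ [t₀, t₀+h], and ‖D²F(x)‖ ≤ M₂ for all x ∈ U. Then ‖u(t₀+h) − u(t₀) − h·φ₁(hJ)(F(u(t₀)))‖ ≤ (C·M₂·M₁²/6)·h³; in particular the exponential Rosenbrock–Euler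 scheme u_{n+1} = u_n + hφ₁(hJ_n)F(u_n) has local error of order three with a constant independent of ‖J‖. -/
open MeasureTheory intervalIntegral Set

/-!
With `w = u - u t₀` and `J = DF(u t₀)`, the solution satisfies `w' = F(u t₀) + J w + r`, where
`r(t) = F(u t) - F(u t₀) - J (u t - u t₀)` is a Taylor remainder of size `M₂ M₁² (t - t₀)² / 2`,
because `DF` moves by at most `M₂ M₁ (t - t₀)` along the solution. By variation of constants,
`w(t₀ + h) - h φ₁(hJ) F(u t₀) = ∫ exp((t₀ + h - s) J) r(s) ds`, and `‖exp(sJ)‖ ≤ C` turns the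
quadratic bound on `r` into the cubic one, without ever involving `‖J‖`.
-/

section

variable {E G : Type*} [NormedAddCommGroup E] [NormedSpace ℝ E]
  [NormedAddCommGroup G] [NormedSpace ℝ G]

theorem norm_image_le_of_norm_deriv_le_mul_pow {f f' : ℝ → E} {a b K : ℝ} (n : ℕ)
    (hf : ∀ t ∈ Icc a b, HasDerivWithinAt f (f' t) (Icc a b) t) (ha : f a = 0)
    (bound : ∀ t ∈ Icc a b, ‖f' t‖ ≤ K * (t - a) ^ n) :
    ∀ t ∈ Icc a b, ‖f t‖ ≤ K / (n + 1) * (t - a) ^ (n + 1) := by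
  have hB : ∀ x : ℝ, HasDerivAt (fun t => K / (n + 1) * (t - a) ^ (n + 1))
      (K * (x - a) ^ n) x := by
    intro x
    have := (((hasDerivAt_id x).sub_const a).fun_pow (n + 1)).const_mul (K / (n + 1))
    refine this.congr_deriv ?_
    simp only [id, Nat.cast_add, Nat.cast_one, add_tsub_cancel_right, mul_one]
    field_simp
  intro t ht
  exact image_norm_le_of_norm_deriv_right_le_deriv_boundary
    (fun t ht => (hf t ht).continuousWithinAt)
    (fun t ht => (hf t (Ico_subset_Icc_self ht)).mono_of_mem_nhdsWithin
      (Icc_mem_nhdsGE_of_mem ht))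
    (by simp [ha]) hB (fun t ht => bound t (Ico_subset_Icc_self ht)) ht

theorem Convex.norm_fderiv_sub_le_of_norm_iteratedFDeriv_two_le {F : E → G} {U : Set E}
    {M : ℝ} (hF : ContDiff ℝ 2 F) (hU : Convex ℝ U)
    (bound : ∀ x ∈ U, ‖iteratedFDeriv ℝ 2 F x‖ ≤ M) {x y : E} (hx : x ∈ U) (hy : y ∈ U) :
    ‖fderiv ℝ F y - fderiv ℝ F x‖ ≤ M * ‖y - x‖ := by
  have hDF : Differentiable ℝ (fderiv ℝ F) :=
    (hF.fderiv_right (m := 1) le_rfl).differentiable one_ne_zero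
  refine hU.norm_image_sub_le_of_norm_fderiv_le (fun z _ => hDF z) (fun z hz => ?_) hx hy
  rw [← norm_iteratedFDeriv_one, norm_iteratedFDeriv_fderiv]
  exact bound z hz

theorem Convex.norm_comp_sub_sub_fderiv_le {F : E → G} {U : Set E} {u u' : ℝ → E}
    {a b M₁ M₂ : ℝ} (hF : ContDiff ℝ 2 F) (hU : Convex ℝ U)
    (hD2F : ∀ x ∈ U, ‖iteratedFDeriv ℝ 2 F x‖ ≤ M₂)
    (hu : ∀ t ∈ Icc a b, HasDerivWithinAt u (u' t) (Icc a b) t)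
    (hu' : ∀ t ∈ Icc a b, ‖u' t‖ ≤ M₁) (huU : ∀ t ∈ Icc a b, u t ∈ U) :
    ∀ t ∈ Icc a b, ‖F (u t) - F (u a) - fderiv ℝ F (u a) (u t - u a)‖
      ≤ M₂ * M₁ ^ 2 / 2 * (t - a) ^ 2 := by
  intro t ht
  have hua : u a ∈ U := huU a (left_mem_Icc.2 (ht.1.trans ht.2))
  have hFd : Differentiable ℝ F := hF.differentiable two_ne_zero
  have hlip : ∀ s ∈ Icc a b, ‖u s - u a‖ ≤ M₁ * (s - a) :=
    norm_image_sub_le_of_norm_deriv_le_segment' hu fun s hs => hu' s (Ico_subset_Icc_self hs)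
  have hderiv : ∀ s ∈ Icc a b, HasDerivWithinAt
      (fun s => F (u s) - F (u a) - fderiv ℝ F (u a) (u s - u a))
      ((fderiv ℝ F (u s) - fderiv ℝ F (u a)) (u' s)) (Icc a b) s := by
    intro s hs
    have hFu := (hFd (u s)).hasFDerivAt.comp_hasDerivWithinAt s (hu s hs)
    have hlin := (fderiv ℝ F (u a)).hasFDerivAt.comp_hasDerivWithinAt s
      ((hu s hs).sub_const (u a))
    exact ((hFu.sub_const (F (u a))).sub hlin).congr_deriv (by simp)
  have hbound : ∀ s ∈ Icc a b,
      ‖(fderiv ℝ F (u s) - fderiv ℝ F (u a)) (u' s)‖ ≤ M₂ * M₁ ^ 2 * (s - a) ^ 1 := by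
    intro s hs
    have hDF : ‖fderiv ℝ F (u s) - fderiv ℝ F (u a)‖ ≤ M₂ * (M₁ * (s - a)) :=
      (hU.norm_fderiv_sub_le_of_norm_iteratedFDeriv_two_le hF hD2F hua (huU s hs)).trans
        (mul_le_mul_of_nonneg_left (hlip s hs) ((norm_nonneg _).trans (hD2F _ hua)))
    calc ‖(fderiv ℝ F (u s) - fderiv ℝ F (u a)) (u' s)‖
        ≤ ‖fderiv ℝ F (u s) - fderiv ℝ F (u a)‖ * ‖u' s‖ := ContinuousLinearMap.le_opNorm _ _
      _ ≤ M₂ * (M₁ * (s - a)) * M₁ :=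
        mul_le_mul hDF (hu' s hs) (norm_nonneg _) ((norm_nonneg _).trans hDF)
      _ = M₂ * M₁ ^ 2 * (s - a) ^ 1 := by ring
  simpa only [Nat.cast_one, one_add_one_eq_two] using
    norm_image_le_of_norm_deriv_le_mul_pow 1 hderiv (by simp) hbound t ht

/-- Variation of constants: `t ↦ exp((a+h-t)J) (w t) - ∫ₐᵗ exp((a+h-s)J) v ds` vanishes at `a`
and its derivative is `exp((a+h-t)J)` applied to the defect of `w` in `w' = v + J w`. -/
theorem norm_sub_integral_exp_apply_le [CompleteSpace E] {J : E →L[ℝ] E} {v : E}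
    {w w' : ℝ → E} {a h C K : ℝ} (n : ℕ) (hh : 0 ≤ h)
    (hw : ∀ t ∈ Icc a (a + h), HasDerivWithinAt w (w' t) (Icc a (a + h)) t) (hwa : w a = 0)
    (hexp : ∀ s ∈ Icc 0 h, ‖NormedSpace.exp (s • J)‖ ≤ C)
    (hdefect : ∀ t ∈ Icc a (a + h), ‖w' t - v - J (w t)‖ ≤ K * (t - a) ^ n) :
    ‖w (a + h) - ∫ s in a..a + h, NormedSpace.exp ((a + h - s) • J) v‖
      ≤ C * K / (n + 1) * h ^ (n + 1) := by
  set c : ℝ → E →L[ℝ] E := fun t => NormedSpace.exp ((a + h - t) • J)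
  have hc : ∀ t, HasDerivAt c (-(c t * J)) t := fun t => by
    simpa [c, Function.comp_def] using
      (hasDerivAt_exp_smul_const J (a + h - t)).scomp t ((hasDerivAt_id t).const_sub (a + h))
  have hcv : Continuous fun s => c s v :=
    (continuous_iff_continuousAt.2 fun t => (hc t).continuousAt).clm_apply continuous_const
  have hderiv : ∀ t ∈ Icc a (a + h), HasDerivWithinAt
      (fun t => c t (w t) - ∫ s in a..t, c s v) (c t (w' t - v - J (w t))) (Icc a (a + h)) t := by
    intro t ht
    have hint := (hcv.integral_hasStrictDerivAt a t).hasDerivAt.hasDerivWithinAt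
      (s := Icc a (a + h))
    refine (((hc t).hasDerivWithinAt.clm_apply (hw t ht)).sub hint).congr_deriv ?_
    simp only [neg_apply, mul_apply_eq_comp, map_sub]
    abel
  have hbound : ∀ t ∈ Icc a (a + h), ‖c t (w' t - v - J (w t))‖ ≤ C * K * (t - a) ^ n := by
    intro t ht
    have hct : ‖c t‖ ≤ C := hexp _ ⟨by linarith [ht.2], by linarith [ht.1]⟩
    calc ‖c t (w' t - v - J (w t))‖ ≤ ‖c t‖ * ‖w' t - v - J (w t)‖ :=
          ContinuousLinearMap.le_opNorm _ _
      _ ≤ C * (K * (t - a) ^ n) :=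
          mul_le_mul hct (hdefect t ht) (norm_nonneg _) ((norm_nonneg _).trans hct)
      _ = C * K * (t - a) ^ n := by ring
  simpa [c] using norm_image_le_of_norm_deriv_le_mul_pow n hderiv (by simp [c, hwa]) hbound
    (a + h) (right_mem_Icc.2 (by linarith))

end

section

variable {E : Type*} [NormedAddCommGroup E] [NormedSpace ℝ E] [FiniteDimensional ℝ E]

theorem phiOp_one_apply (A : E →L[ℝ] E) (v : E) :
    phiOp 1 A v = ∫ θ in (0:ℝ)..1, NormedSpace.exp ((1 - θ) • A) v := by
  have hcont : Continuous fun θ : ℝ => NormedSpace.exp ((1 - θ) • A) :=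
    (differentiable_exp_smul_const ℝ A).continuous.comp (continuous_const.sub continuous_id)
  rw [phiOp, ContinuousLinearMap.intervalIntegral_apply]
  · simp
  · exact (by simpa using hcont : Continuous fun θ : ℝ =>
      (θ ^ 0 / (Nat.factorial 0 : ℝ)) • NormedSpace.exp ((1 - θ) • A)).intervalIntegrable 0 1

theorem integral_exp_smul_apply_eq_smul_phiOp_one (J : E →L[ℝ] E) (v : E) (a h : ℝ) :
    ∫ s in a..a + h, NormedSpace.exp ((a + h - s) • J) v = h • phiOp 1 (h • J) v := by
  calc ∫ s in a..a + h, NormedSpace.exp ((a + h - s) • J) v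
      = ∫ σ in (0:ℝ)..h, NormedSpace.exp (σ • J) v :=
        (integral_comp_sub_left (fun σ => NormedSpace.exp (σ • J) v) (a + h)).trans (by simp)
    _ = h • ∫ θ in (0:ℝ)..1, NormedSpace.exp (θ • h • J) v := by
        have hscale := smul_integral_comp_mul_left (a := 0) (b := 1)
          (fun σ => NormedSpace.exp (σ • J) v) h
        simp only [mul_zero, mul_one] at hscale
        simp only [← hscale, smul_smul, mul_comm]
    _ = h • phiOp 1 (h • J) v := by
        rw [phiOp_one_apply, integral_comp_sub_left (fun θ => NormedSpace.exp (θ • h • J) v)]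
        norm_num

end

theorem exprb_euler_local_error_general
    {E : Type*} [NormedAddCommGroup E] [NormedSpace ℝ E] [FiniteDimensional ℝ E]
    (F : E → E) (hF : ContDiff ℝ 2 F) (t₀ h : ℝ) (hh : 0 < h)
    (u : ℝ → E)
    (hu : ∀ t ∈ Icc t₀ (t₀ + h), HasDerivWithinAt u (F (u t)) (Icc t₀ (t₀ + h)) t)
    (J : E →L[ℝ] E) (hJ : J = fderiv ℝ F (u t₀))
    (C M₁ M₂ : ℝ)
    (U : Set E) (hconv : Convex ℝ U)
    (hsol : ∀ t ∈ Icc t₀ (t₀ + h), u t ∈ U)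
    (hexp : ∀ s ∈ Icc (0:ℝ) h, ‖NormedSpace.exp (s • J)‖ ≤ C)
    (hder : ∀ t ∈ Icc t₀ (t₀ + h), ‖F (u t)‖ ≤ M₁)
    (hD2F : ∀ x ∈ U, ‖iteratedFDeriv ℝ 2 F x‖ ≤ M₂) :
    ‖u (t₀ + h) - u t₀ - h • phiOp 1 (h • J) (F (u t₀))‖
      ≤ (C * M₂ * M₁ ^ 2 / 6) * h ^ 3 := by
  subst hJ
  have hdefect := hconv.norm_comp_sub_sub_fderiv_le hF hD2F hu hder hsol
  have herror := norm_sub_integral_exp_apply_le (w := fun t => u t - u t₀) 2 hh.le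
    (fun t ht => (hu t ht).sub_const (u t₀)) (sub_self _) hexp hdefect
  rw [integral_exp_smul_apply_eq_smul_phiOp_one] at herror
  convert herror using 1
  push_cast
  ring

/-- Local error of the exponential Rosenbrock–Euler method: if `u' = F(u)` on
`[t₀, t₀+h]`, `J = DF(u(t₀))`, `‖exp(sJ)‖ ≤ C` on `[0,h]`, `‖u'‖ ≤ M₁` along the
solution and `‖D²F‖ ≤ M₂` on an open convex set containing the solution, then
`‖u(t₀+h) - u(t₀) - h φ₁(hJ) F(u(t₀))‖ ≤ (C M₂ M₁²/6) h³`, with a constant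
independent of `‖J‖`. -/
theorem exprb_euler_local_error
    {E : Type*} [NormedAddCommGroup E] [NormedSpace ℝ E] [FiniteDimensional ℝ E]
    (F : E → E) (hF : ContDiff ℝ 2 F) (t₀ h : ℝ) (hh : 0 < h)
    (u : ℝ → E)
    (hu : ∀ t ∈ Icc t₀ (t₀ + h), HasDerivWithinAt u (F (u t)) (Icc t₀ (t₀ + h)) t)
    (J : E →L[ℝ] E) (hJ : J = fderiv ℝ F (u t₀))
    (C M₁ M₂ : ℝ) (hC : 0 ≤ C) (hM₁ : 0 ≤ M₁) (hM₂ : 0 ≤ M₂)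
    (U : Set E) (hU : IsOpen U) (hconv : Convex ℝ U)
    (hsol : ∀ t ∈ Icc t₀ (t₀ + h), u t ∈ U)
    (hexp : ∀ s ∈ Icc (0:ℝ) h, ‖NormedSpace.exp (s • J)‖ ≤ C)
    (hder : ∀ t ∈ Icc t₀ (t₀ + h), ‖F (u t)‖ ≤ M₁)
    (hD2F : ∀ x ∈ U, ‖iteratedFDeriv ℝ 2 F x‖ ≤ M₂) :
    ‖u (t₀ + h) - u t₀ - h • phiOp 1 (h • J) (F (u t₀))‖
      ≤ (C * M₂ * M₁ ^ 2 / 6) * h ^ 3 :=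
  exprb_euler_local_error_general F hF t₀ h hh u hu J hJ C M₁ M₂ U hconv hsol hexp hder hD2F
end

section
/- Let E be a finite-dimensional real normed vector space, A : E → E a continuous linear map, p ≥ 1 an integer, and v₀, v₁, …, v_p ∈ E. Define y : ℝ → E by y(t) = exp(tA)(v₀) + Σ_{k=1}^{p} t^k · φ_k(tA)(v_k). Then y(0) = v₀ and y is differentiable with y'(t) = A(y(t)) + Σ_{j=1}^{p} (t^{j−1}/(j−1)!)·v_j for all t; consequently the linear combination φ₀(A)v₀ + φ₁(A)v₁ + ⋯ + φ_p(A)v_p equals the value y(1) of the solution of this initial value problem. -/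
open MeasureTheory intervalIntegral Finset

open NormedSpace

section OperatorExp

variable {E : Type*} [NormedAddCommGroup E] [NormedSpace ℝ E] [CompleteSpace E]

theorem exp_add_smul (A : E →L[ℝ] E) (s t : ℝ) :
    exp ((s + t) • A) = exp (s • A) * exp (t • A) := by
  let +nondep : NormedAlgebra ℚ (E →L[ℝ] E) := .restrictScalars ℚ ℝ _
  rw [add_smul, exp_add_of_commute (((Commute.refl A).smul_left s).smul_right t)]

theorem exp_smul_apply_exp_neg_smul_apply (A : E →L[ℝ] E) (t : ℝ) (x : E) :
    exp (t • A) (exp ((-t) • A) x) = x := by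
  rw [← mul_apply_eq_comp, ← exp_add_smul, add_neg_cancel, zero_smul, exp_zero,
    one_apply_eq_self]

theorem continuous_exp_smul_apply (A : E →L[ℝ] E) {c : ℝ → ℝ} (hc : Continuous c) (x : E) :
    Continuous fun s => exp (c s • A) x := by
  let +nondep : NormedAlgebra ℚ (E →L[ℝ] E) := .restrictScalars ℚ ℝ _
  exact (exp_continuous.comp (hc.smul continuous_const)).clm_apply continuous_const

theorem hasDerivAt_exp_smul_apply {A : E →L[ℝ] E} {w : ℝ → E} {w' : E} {t : ℝ}
    (hw : HasDerivAt w w' t) :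
    HasDerivAt (fun s => exp (s • A) (w s)) (A (exp (t • A) (w t)) + exp (t • A) w') t :=
  (hasDerivAt_exp_smul_const' A t).clm_apply hw

end OperatorExp

section PhiOp

variable {E : Type*} [NormedAddCommGroup E] [NormedSpace ℝ E] [FiniteDimensional ℝ E]

theorem phiOp_succ_apply (B : E →L[ℝ] E) (m : ℕ) (x : E) :
    phiOp (m + 1) B x = ∫ θ in (0:ℝ)..1, (θ ^ m / (m.factorial : ℝ)) • exp ((1 - θ) • B) x := by
  let +nondep : NormedAlgebra ℚ (E →L[ℝ] E) := .restrictScalars ℚ ℝ _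
  have hcont : Continuous fun θ : ℝ => (θ ^ m / (m.factorial : ℝ)) • exp ((1 - θ) • B) :=
    ((continuous_pow m).div_const _).smul
      (exp_continuous.comp ((continuous_const.sub continuous_id).smul continuous_const))
  rw [phiOp, ContinuousLinearMap.intervalIntegral_apply (hcont.intervalIntegrable 0 1)]
  rfl

theorem pow_smul_phiOp_smul_apply (A : E →L[ℝ] E) {k : ℕ} (hk : k ≠ 0) (t : ℝ) (x : E) :
    t ^ k • phiOp k (t • A) x = exp (t • A)
      (∫ s in (0:ℝ)..t, (s ^ (k - 1) / ((k - 1).factorial : ℝ)) • exp ((-s) • A) x) := by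
  obtain ⟨m, rfl⟩ := Nat.exists_eq_add_one_of_ne_zero hk
  set f : ℝ → E := fun s => (s ^ m / (m.factorial : ℝ)) • exp ((-s) • A) x
  have hf : Continuous fun θ => f (t * θ) :=
    ((continuous_pow m).div_const _).comp (continuous_const_mul t) |>.smul
      (continuous_exp_smul_apply A (continuous_const_mul t).neg x)
  have hrescale : ∀ θ : ℝ, t ^ m • (θ ^ m / (m.factorial : ℝ)) • exp ((1 - θ) • (t • A)) x
      = exp (t • A) (f (t * θ)) := by
    intro θ
    have : (1 - θ) • (t • A) = (t + -(t * θ)) • A := by rw [smul_smul]; congr 1; ring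
    rw [this, exp_add_smul, mul_apply_eq_comp, map_smul, smul_smul, mul_pow,
      mul_div_assoc]
  calc t ^ (m + 1) • phiOp (m + 1) (t • A) x
      = t • ∫ θ in (0:ℝ)..1, t ^ m • (θ ^ m / (m.factorial : ℝ)) • exp ((1 - θ) • (t • A)) x := by
        rw [phiOp_succ_apply, intervalIntegral.integral_smul, smul_smul, pow_succ']
    _ = t • ∫ θ in (0:ℝ)..1, exp (t • A) (f (t * θ)) := by simp only [hrescale]
    _ = exp (t • A) (t • ∫ θ in (0:ℝ)..1, f (t * θ)) := by
        rw [ContinuousLinearMap.intervalIntegral_comp_comm _ (hf.intervalIntegrable 0 1), map_smul]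
    _ = exp (t • A) (∫ s in (0:ℝ)..t, f s) := by
        rw [intervalIntegral.smul_integral_comp_mul_left, mul_zero, mul_one]

end PhiOp

theorem phi_linear_combination_is_ode_solution_general
    {E : Type*} [NormedAddCommGroup E] [NormedSpace ℝ E] [FiniteDimensional ℝ E]
    (A : E →L[ℝ] E) (p : ℕ) (v : ℕ → E)
    (y : ℝ → E)
    (hy : ∀ t : ℝ, y t = NormedSpace.exp (t • A) (v 0)
        + ∑ k ∈ Finset.Icc 1 p, t ^ k • phiOp k (t • A) (v k)) :
    y 0 = v 0 ∧
    (∀ t : ℝ, HasDerivAt y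
        (A (y t) + ∑ j ∈ Finset.Icc 1 p, (t ^ (j - 1) / ((j - 1).factorial : ℝ)) • v j) t) ∧
    (∑ k ∈ Finset.range (p + 1), phiOp k A (v k)) = y 1 := by
  set g : ℕ → ℝ → E := fun k s =>
    (s ^ (k - 1) / ((k - 1).factorial : ℝ)) • exp ((-s) • A) (v k)
  have hg : ∀ k, Continuous (g k) := fun k =>
    ((continuous_pow _).div_const _).smul (continuous_exp_smul_apply A continuous_neg (v k))
  set w : ℝ → E := fun t => v 0 + ∑ k ∈ Icc 1 p, ∫ s in (0:ℝ)..t, g k s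
  have hyw : ∀ t, y t = exp (t • A) (w t) := fun t => by
    rw [hy, map_add, map_sum]
    congr 1
    exact sum_congr rfl fun k hk => pow_smul_phiOp_smul_apply A (by grind) t (v k)
  have hw : ∀ t, HasDerivAt w (∑ k ∈ Icc 1 p, g k t) t := fun t =>
    (HasDerivAt.fun_sum fun k _ => ((hg k).integral_hasStrictDerivAt 0 t).hasDerivAt).const_add _
  refine ⟨by simp [hyw, w], fun t => ?_, ?_⟩
  · have hexp := hasDerivAt_exp_smul_apply (A := A) (hw t)
    rw [← hyw, map_sum] at hexp
    simp only [g, map_smul, exp_smul_apply_exp_neg_smul_apply] at hexp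
    exact hexp.congr_of_eventuallyEq (.of_forall hyw)
  · rw [range_eq_Ico, sum_eq_sum_Ico_succ_bot p.succ_pos, zero_add, Nat.succ_eq_add_one,
      Ico_add_one_right_eq_Icc, hy 1]
    simp only [phiOp, one_smul, one_pow]

/-- The function `y(t) = exp(tA)v₀ + Σ_{k=1}^p t^k φ_k(tA) v_k` satisfies
`y(0) = v₀` and `y'(t) = A y(t) + Σ_{j=1}^p (t^{j-1}/(j-1)!) v_j`; consequently
the linear combination `φ₀(A)v₀ + φ₁(A)v₁ + ⋯ + φ_p(A)v_p` equals `y(1)`. -/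
theorem phi_linear_combination_is_ode_solution
    {E : Type*} [NormedAddCommGroup E] [NormedSpace ℝ E] [FiniteDimensional ℝ E]
    (A : E →L[ℝ] E) (p : ℕ) (hp : 1 ≤ p) (v : ℕ → E)
    (y : ℝ → E)
    (hy : ∀ t : ℝ, y t = NormedSpace.exp (t • A) (v 0)
        + ∑ k ∈ Finset.Icc 1 p, t ^ k • phiOp k (t • A) (v k)) :
    y 0 = v 0 ∧
    (∀ t : ℝ, HasDerivAt y
        (A (y t) + ∑ j ∈ Finset.Icc 1 p, (t ^ (j - 1) / ((j - 1).factorial : ℝ)) • v j) t) ∧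
    (∑ k ∈ Finset.range (p + 1), phiOp k A (v k)) = y 1 :=
  phi_linear_combination_is_ode_solution_general A p v y hy
end

section
/- Let E be a finite-dimensional real normed vector space, A : E → E a continuous linear map, p ≥ 1 an integer, v₀, …, v_p ∈ E, and let y(t) = exp(tA)(v₀) + Σ_{k=1}^{p} t^k·φ_k(tA)(v_k). Fix s ≥ 0 and define vectors w₀, …, w_p by the recurrence w₀ = y(s) and w_j = A(w_{j−1}) + Σ_{ℓ=0}^{p−j} (s^ℓ/ℓ!)·v_{j+ℓ} for j = 1, …, p. Then for all τ ≥ 0, y(s + τ) = τ^p · φ_p(τA)(w_p) + Σ_{j=0}^{p−1} (τ^j/j!)·w_j; i.e., each substep of the time-stepping scheme requires the evaluation of only the single matrix function φ_p(τA)w_p. -/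
open MeasureTheory intervalIntegral Finset

/-! With `ψ_k(t) = t^k φ_k(tA)` one has `ψ_k(t) = ∫₀ᵗ σ^(k-1)/(k-1)! exp((t-σ)A) dσ` for `k ≥ 1`.
Splitting this integral at `s` and expanding `(ρ + s)^(k-1)` binomially gives
`ψ_k(s+τ) = exp(τA) ψ_k(s) + Σ_ℓ s^ℓ/ℓ! ψ_(k-ℓ)(τ)`, hence
`y(s+τ) = exp(τA) w₀ + Σ_j ψ_j(τ) u_j` with `u_j = Σ_ℓ s^ℓ/ℓ! v_(j+ℓ)`.
Integration by parts gives `ψ_j(τ) = ψ_(j+1)(τ) A + τ^j/j!`, which absorbs `u_(j+1)` into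
`w_(j+1) = A w_j + u_(j+1)` one index at a time. -/

open NormedSpace
open scoped Nat

theorem add_pow_div_factorial {K : Type*} [Field K] [CharZero K] (a b : K) (n : ℕ) :
    (a + b) ^ n / n ! = ∑ i ∈ range (n + 1), a ^ i / i ! * (b ^ (n - i) / (n - i)!) := by
  rw [add_pow, sum_div]
  refine sum_congr rfl fun i hi => ?_
  rw [Nat.cast_choose K (Nat.lt_succ_iff.mp (mem_range.mp hi))]
  have : (n ! : K) ≠ 0 := Nat.cast_ne_zero.mpr n.factorial_ne_zero
  field_simp

section BanachAlgebra

variable {𝔸 : Type*} [NormedRing 𝔸] [NormedAlgebra ℝ 𝔸] [CompleteSpace 𝔸]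

theorem exp_add_smul_s12 (x : 𝔸) (a b : ℝ) : exp ((a + b) • x) = exp (a • x) * exp (b • x) := by
  let +nondep : NormedAlgebra ℚ 𝔸 := .restrictScalars ℚ ℝ 𝔸
  rw [add_smul]
  exact exp_add_of_commute (((Commute.refl x).smul_left a).smul_right b)

theorem Continuous.exp_smul_const {g : ℝ → ℝ} (hg : Continuous g) (x : 𝔸) :
    Continuous fun σ => exp (g σ • x) :=
  (differentiable_exp_smul_const ℝ x).continuous.comp hg

theorem hasDerivAt_exp_sub_smul (x : 𝔸) (t σ : ℝ) :
    HasDerivAt (fun σ : ℝ => exp ((t - σ) • x)) (-(exp ((t - σ) • x) * x)) σ := by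
  simpa [Function.comp_def] using
    (hasDerivAt_exp_smul_const x (t - σ)).scomp σ ((hasDerivAt_id σ).const_sub t)

theorem integral_smul_exp_one_sub_smul_mul {u u' : ℝ → ℝ} (hu : ∀ θ, HasDerivAt u (u' θ) θ)
    (hu' : Continuous u') (x : 𝔸) :
    (∫ θ in (0:ℝ)..1, u θ • exp ((1 - θ) • x)) * x
      = u 0 • exp x - u 1 • 1 + ∫ θ in (0:ℝ)..1, u' θ • exp ((1 - θ) • x) := by
  have hexp : Continuous fun θ : ℝ => exp ((1 - θ) • x) :=
    (continuous_const.sub continuous_id).exp_smul_const x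
  have hu_cont : Continuous u := continuous_iff_continuousAt.2 fun θ => (hu θ).continuousAt
  have hparts := integral_smul_deriv_eq_deriv_smul (a := 0) (b := 1) (fun θ _ => hu θ)
    (fun θ _ => hasDerivAt_exp_sub_smul x 1 θ) (hu'.intervalIntegrable _ _)
    ((hexp.mul continuous_const).neg.intervalIntegrable _ _)
  have hint : IntervalIntegrable (fun θ => u θ • exp ((1 - θ) • x)) volume 0 1 :=
    (hu_cont.smul hexp).intervalIntegrable _ _
  have hmul := ((ContinuousLinearMap.mul ℝ 𝔸).flip x).intervalIntegral_comp_comm hint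
  simp only [ContinuousLinearMap.flip_apply, ContinuousLinearMap.mul_apply', smul_mul_assoc]
    at hmul
  simp only [smul_neg, intervalIntegral.integral_neg, sub_self, sub_zero, zero_smul, exp_zero,
    one_smul] at hparts
  rw [← hmul, ← neg_neg (∫ θ in (0:ℝ)..1, _), hparts]
  abel

end BanachAlgebra

section Telescoping

variable {E : Type*} [NormedAddCommGroup E] [NormedSpace ℝ E]

theorem apply_add_sum_range_eq_of_eq_mul_add (ψ : ℕ → E →L[ℝ] E) (A : E →L[ℝ] E) (c : ℕ → ℝ)
    (hψ : ∀ j, ψ j = ψ (j + 1) * A + c j • 1) (w u : ℕ → E) :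
    ∀ n, (∀ j < n, w (j + 1) = A (w j) + u (j + 1)) →
      ψ 0 (w 0) + ∑ j ∈ range n, ψ (j + 1) (u (j + 1))
        = ψ n (w n) + ∑ j ∈ range n, c j • w j
  | 0, _ => by simp
  | n + 1, hw => by
    have hψn : ψ n (w n) = ψ (n + 1) (A (w n)) + c n • w n := by
      simp [hψ n]
    rw [sum_range_succ, ← add_assoc, apply_add_sum_range_eq_of_eq_mul_add ψ A c hψ w u n
      (fun j hj => hw j (by omega)), hψn, hw n (by omega), map_add, sum_range_succ]
    abel

end Telescoping

section Phi

variable {E : Type*} [NormedAddCommGroup E] [NormedSpace ℝ E] [FiniteDimensional ℝ E]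

theorem phiOp_succ (B : E →L[ℝ] E) (k : ℕ) :
    phiOp (k + 1) B = ∫ θ in (0:ℝ)..1, (θ ^ k / k !) • exp ((1 - θ) • B) := rfl

theorem phiOp_succ_mul_add (B : E →L[ℝ] E) (k : ℕ) :
    phiOp (k + 1) B * B + ((k ! : ℝ))⁻¹ • 1 = phiOp k B := by
  cases k with
  | zero =>
    have h := integral_smul_exp_one_sub_smul_mul (u := fun _ => 1) (u' := fun _ => 0)
      (fun θ => hasDerivAt_const θ 1) continuous_const B
    simp only [one_smul, zero_smul, intervalIntegral.integral_zero, add_zero] at h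
    simp [h, phiOp]
  | succ j =>
    have hu : ∀ θ : ℝ, HasDerivAt (fun θ : ℝ => θ ^ (j + 1) / (j + 1)!) (θ ^ j / j !) θ := by
      intro θ
      refine ((hasDerivAt_pow (j + 1) θ).div_const _).congr_deriv ?_
      rw [Nat.factorial_succ, Nat.cast_mul]
      field_simp
      push_cast
      ring
    have h := integral_smul_exp_one_sub_smul_mul hu
      ((continuous_pow j).div_const _) B
    simp only [ne_eq, Nat.add_eq_zero_iff, one_ne_zero, and_false, not_false_eq_true,
      zero_pow, zero_div, zero_smul, one_pow, one_div, zero_sub] at h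
    rw [phiOp_succ, h, ← phiOp_succ]
    abel

noncomputable def scaledPhiOp (A : E →L[ℝ] E) (k : ℕ) (t : ℝ) : E →L[ℝ] E :=
  t ^ k • phiOp k (t • A)

theorem scaledPhiOp_zero (A : E →L[ℝ] E) (t : ℝ) : scaledPhiOp A 0 t = exp (t • A) := by
  simp [scaledPhiOp, phiOp]

theorem scaledPhiOp_eq_succ_mul_add (A : E →L[ℝ] E) (k : ℕ) (t : ℝ) :
    scaledPhiOp A k t = scaledPhiOp A (k + 1) t * A + (t ^ k / k !) • 1 := by
  rw [scaledPhiOp, scaledPhiOp, ← phiOp_succ_mul_add (t • A) k, smul_add, mul_smul_comm,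
    smul_smul, smul_smul, smul_mul_assoc, pow_succ, div_eq_mul_inv]

theorem scaledPhiOp_succ_eq_integral (A : E →L[ℝ] E) (k : ℕ) (t : ℝ) :
    scaledPhiOp A (k + 1) t = ∫ σ in (0:ℝ)..t, (σ ^ k / k !) • exp ((t - σ) • A) := by
  have key := smul_integral_comp_mul_left
    (fun σ : ℝ => (σ ^ k / k !) • exp ((t - σ) • A)) t (a := 0) (b := 1)
  simp only [mul_zero, mul_one] at key
  rw [← key, scaledPhiOp, phiOp_succ, pow_succ', mul_smul, ← intervalIntegral.integral_smul]
  congr 2 with θ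
  rw [smul_smul, smul_smul, mul_pow, mul_div_assoc, show (1 - θ) * t = t - t * θ by ring]

theorem scaledPhiOp_succ_add (A : E →L[ℝ] E) (k : ℕ) (s τ : ℝ) :
    scaledPhiOp A (k + 1) (s + τ) = exp (τ • A) * scaledPhiOp A (k + 1) s
      + ∑ i ∈ range (k + 1), (s ^ (k - i) / (k - i)!) • scaledPhiOp A (i + 1) τ := by
  have hcont : ∀ (j : ℕ) (t : ℝ), Continuous fun σ : ℝ => (σ ^ j / j !) • exp ((t - σ) • A) :=
    fun j t => ((continuous_pow j).div_const _).smul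
      ((continuous_const.sub continuous_id).exp_smul_const A)
  have hf := hcont k (s + τ)
  rw [scaledPhiOp_succ_eq_integral, ← integral_add_adjacent_intervals (b := s)
    (hf.intervalIntegrable _ _) (hf.intervalIntegrable _ _)]
  congr 1
  · have hsplit : ∀ σ : ℝ, (σ ^ k / k !) • exp ((s + τ - σ) • A)
        = exp (τ • A) * ((σ ^ k / k !) • exp ((s - σ) • A)) := by
      intro σ
      rw [show s + τ - σ = τ + (s - σ) by ring, exp_add_smul_s12 A τ (s - σ), mul_smul_comm]
    have hmul := ((ContinuousLinearMap.mul ℝ _) (exp (τ • A))).intervalIntegral_comp_comm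
      ((hcont k s).intervalIntegrable (μ := volume) 0 s)
    simp only [ContinuousLinearMap.mul_apply'] at hmul
    simp only [hsplit, hmul, scaledPhiOp_succ_eq_integral]
  · have hshift := integral_comp_add_right
      (fun σ : ℝ => (σ ^ k / k !) • exp ((s + τ - σ) • A)) s (a := 0) (b := τ)
    rw [zero_add, add_comm τ s] at hshift
    have hbinom : ∀ ρ : ℝ, ((ρ + s) ^ k / k !) • exp ((s + τ - (ρ + s)) • A)
        = ∑ i ∈ range (k + 1),
            (s ^ (k - i) / (k - i)!) • ((ρ ^ i / i !) • exp ((τ - ρ) • A)) := by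
      intro ρ
      rw [add_pow_div_factorial, sum_smul, show s + τ - (ρ + s) = τ - ρ by ring]
      refine sum_congr rfl fun i _ => ?_
      rw [smul_smul, mul_comm]
    rw [← hshift]
    simp only [hbinom]
    rw [intervalIntegral.integral_finsetSum]
    · simp only [intervalIntegral.integral_smul, scaledPhiOp_succ_eq_integral]
    · exact fun i _ => ((hcont i τ).const_smul (s ^ (k - i) / (k - i)! : ℝ)).intervalIntegrable _ _

theorem sum_scaledPhiOp_add_apply (A : E →L[ℝ] E) (v : ℕ → E) (p : ℕ) (s τ : ℝ) :
    ∑ k ∈ range (p + 1), scaledPhiOp A k (s + τ) (v k)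
      = exp (τ • A) (∑ k ∈ range (p + 1), scaledPhiOp A k s (v k))
        + ∑ j ∈ range p, scaledPhiOp A (j + 1) τ
            (∑ ℓ ∈ range (p - (j + 1) + 1), (s ^ ℓ / ℓ !) • v (j + 1 + ℓ)) := by
  have hswap : ∑ k ∈ range p, ∑ i ∈ range (k + 1),
        ((s ^ (k - i) / (k - i)!) • scaledPhiOp A (i + 1) τ) (v (k + 1))
      = ∑ j ∈ range p, scaledPhiOp A (j + 1) τ
          (∑ ℓ ∈ range (p - (j + 1) + 1), (s ^ ℓ / ℓ !) • v (j + 1 + ℓ)) := by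
    rw [sum_comm' (t' := range p) (s' := fun i => Ico i p)
      (by intro k i; simp only [mem_range, mem_Ico]; omega)]
    refine sum_congr rfl fun j hj => ?_
    rw [sum_Ico_eq_sum_range, show p - (j + 1) + 1 = p - j by have := mem_range.mp hj; omega,
      map_sum]
    refine sum_congr rfl fun ℓ _ => ?_
    rw [map_smul, smul_apply, Nat.add_sub_cancel_left,
      show j + ℓ + 1 = j + 1 + ℓ by ring]
  rw [sum_range_succ', sum_range_succ', scaledPhiOp_zero, scaledPhiOp_zero, add_comm s τ,
    exp_add_smul_s12 A τ s, add_comm τ s]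
  simp only [scaledPhiOp_succ_add, add_apply, _root_.sum_apply, mul_apply_eq_comp, sum_add_distrib,
    hswap, map_add, map_sum]
  abel

end Phi

theorem phi_time_stepping_single_phi_general
    {E : Type*} [NormedAddCommGroup E] [NormedSpace ℝ E] [FiniteDimensional ℝ E]
    (A : E →L[ℝ] E) (p : ℕ) (v : ℕ → E)
    (y : ℝ → E)
    (hy : ∀ t : ℝ, y t = NormedSpace.exp (t • A) (v 0)
        + ∑ k ∈ Finset.Icc 1 p, t ^ k • phiOp k (t • A) (v k))
    (s : ℝ)
    (w : ℕ → E) (hw0 : w 0 = y s)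
    (hwj : ∀ j : ℕ, 1 ≤ j → j ≤ p →
      w j = A (w (j - 1))
        + ∑ ℓ ∈ Finset.range (p - j + 1), (s ^ ℓ / (ℓ.factorial : ℝ)) • v (j + ℓ)) :
    ∀ τ : ℝ, 0 ≤ τ →
      y (s + τ) = τ ^ p • phiOp p (τ • A) (w p)
        + ∑ j ∈ Finset.range p, (τ ^ j / (j.factorial : ℝ)) • w j := by
  intro τ _
  have hy' : ∀ t, y t = ∑ k ∈ range (p + 1), scaledPhiOp A k t (v k) := by
    intro t
    rw [hy, sum_range_succ', scaledPhiOp_zero, add_comm, ← Ico_add_one_right_eq_Icc,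
      sum_Ico_eq_sum_range]
    simp [scaledPhiOp, add_comm]
  set u : ℕ → E := fun j => ∑ ℓ ∈ range (p - j + 1), (s ^ ℓ / ℓ !) • v (j + ℓ)
  have hw : ∀ j < p, w (j + 1) = A (w j) + u (j + 1) := fun j hj => by
    simpa using hwj (j + 1) (by omega) hj
  rw [hy', sum_scaledPhiOp_add_apply, ← hy', ← hw0, ← scaledPhiOp_zero,
    apply_add_sum_range_eq_of_eq_mul_add (scaledPhiOp A · τ) A (fun j => τ ^ j / j !)
      (fun j => scaledPhiOp_eq_succ_mul_add A j τ) w u p hw]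
  rfl

/-- With `y(t) = exp(tA)v₀ + Σ_{k=1}^p t^k φ_k(tA) v_k`, `w₀ = y(s)` and
`w_j = A w_{j-1} + Σ_{ℓ=0}^{p-j} (s^ℓ/ℓ!) v_{j+ℓ}` for `j = 1, …, p`, one has
`y(s+τ) = τ^p φ_p(τA) w_p + Σ_{j=0}^{p-1} (τ^j/j!) w_j`: each substep requires the
evaluation of only the single matrix function `φ_p(τA) w_p`. -/
theorem phi_time_stepping_single_phi
    {E : Type*} [NormedAddCommGroup E] [NormedSpace ℝ E] [FiniteDimensional ℝ E]
    (A : E →L[ℝ] E) (p : ℕ) (hp : 1 ≤ p) (v : ℕ → E)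
    (y : ℝ → E)
    (hy : ∀ t : ℝ, y t = NormedSpace.exp (t • A) (v 0)
        + ∑ k ∈ Finset.Icc 1 p, t ^ k • phiOp k (t • A) (v k))
    (s : ℝ) (hs : 0 ≤ s)
    (w : ℕ → E) (hw0 : w 0 = y s)
    (hwj : ∀ j : ℕ, 1 ≤ j → j ≤ p →
      w j = A (w (j - 1))
        + ∑ ℓ ∈ Finset.range (p - j + 1), (s ^ ℓ / (ℓ.factorial : ℝ)) • v (j + ℓ)) :
    ∀ τ : ℝ, 0 ≤ τ →
      y (s + τ) = τ ^ p • phiOp p (τ • A) (w p)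
        + ∑ j ∈ Finset.range p, (τ ^ j / (j.factorial : ℝ)) • w j :=
  phi_time_stepping_single_phi_general A p v y hy s w hw0 hwj
end
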